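/- Let m ∈ ℝ and let β : (0,∞) → ℝ be twice differentiable with −1 < β(r) < 1 for all r > 0, satisfying the second-order equation d/dr [ r·β′(r)/(1−β(r)²) ] = 4·m²·r·β(r)·(1+β(r)²)/(1−β(r)²)² for all r > 0. Then h(r) := artanh(β(r)) = (1/2)·log((1+β(r))/(1−β(r))) is twice differentiable on (0,∞) and satisfies r·h″(r) + h′(r) = m²·r·sinh(4·h(r)) for all r > 0. -/

import Mathlib

/-- The inverse hyperbolic tangent, `artanh x = (1/2)·log((1+x)/(1−x))` for `x ∈ (−1,1)`. -/
noncomputable def artanh (x : ℝ) : ℝ := Real.log ((1 + x) / (1 - x)) / 2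

lemma artanh_eq {x : ℝ} (h1 : -1 < x) (h2 : x < 1) :
    artanh x = (Real.log (1 + x) - Real.log (1 - x)) / 2 := by
  unfold artanh
  rw [Real.log_div (by linarith) (by linarith)]

lemma hasDerivAt_artanh {x : ℝ} (h1 : -1 < x) (h2 : x < 1) :
    HasDerivAt artanh (1 / (1 - x ^ 2)) x := by
  have hA : HasDerivAt (fun y : ℝ => Real.log (1 + y)) (1 / (1 + x)) x := by
    have h : HasDerivAt (fun y : ℝ => 1 + y) 1 x := (hasDerivAt_id x).const_add 1
    simpa using h.log (by linarith)
  have hB : HasDerivAt (fun y : ℝ => Real.log (1 - y)) (-(1 / (1 - x))) x := by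
    have h : HasDerivAt (fun y : ℝ => 1 - y) (-1) x := (hasDerivAt_id x).const_sub 1
    have := h.log (by linarith : (1:ℝ) - x ≠ 0)
    simpa [neg_div] using this
  have h := (hA.sub hB).div_const 2
  have heq : (fun y => (Real.log (1 + y) - Real.log (1 - y)) / 2) =ᶠ[nhds x] artanh := by
    filter_upwards [Ioo_mem_nhds h1 h2] with y hy
    exact (artanh_eq hy.1 hy.2).symm
  have h' := h.congr_of_eventuallyEq heq.symm
  refine h'.congr_deriv ?_
  have e1 : (1:ℝ) + x ≠ 0 := by linarith
  have e2 : (1:ℝ) - x ≠ 0 := by linarith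
  have e3 : (1:ℝ) - x ^ 2 ≠ 0 := by nlinarith
  field_simp
  ring

lemma sinh_four_artanh {x : ℝ} (h1 : -1 < x) (h2 : x < 1) :
    Real.sinh (4 * artanh x) = 4 * x * (1 + x ^ 2) / (1 - x ^ 2) ^ 2 := by
  have hx1 : (0:ℝ) < 1 + x := by linarith
  have hx2 : (0:ℝ) < 1 - x := by linarith
  have hy : (0:ℝ) < (1 + x) / (1 - x) := div_pos hx1 hx2
  have h4 : 4 * artanh x = 2 * Real.log ((1 + x) / (1 - x)) := by unfold artanh; ring
  rw [h4, Real.sinh_eq, Real.exp_neg, two_mul, Real.exp_add, Real.exp_log hy]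
  have e1 : (1:ℝ) + x ≠ 0 := ne_of_gt hx1
  have e2 : (1:ℝ) - x ≠ 0 := ne_of_gt hx2
  have e3 : (1:ℝ) - x ^ 2 ≠ 0 := by nlinarith
  field_simp
  ring

/-- Reduction of the two-point isomonodromic deformation equation to a radial ODE:
if `β : (0,∞) → (−1,1)` is twice differentiable and satisfies
`d/dr [rβ′/(1−β²)] = 4m²rβ(1+β²)/(1−β²)²`, then `h = artanh ∘ β` is twice
differentiable and satisfies `r·h″ + h′ = m²·r·sinh(4h)`. -/
theorem stmt18 (m : ℝ) (β : ℝ → ℝ)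
    (hdiff : ∀ r : ℝ, 0 < r → DifferentiableAt ℝ β r ∧ DifferentiableAt ℝ (deriv β) r)
    (hrange : ∀ r : ℝ, 0 < r → -1 < β r ∧ β r < 1)
    (heq : ∀ r : ℝ, 0 < r →
      deriv (fun s => s * deriv β s / (1 - β s ^ 2)) r =
        4 * m ^ 2 * r * β r * (1 + β r ^ 2) / (1 - β r ^ 2) ^ 2) :
    (∀ r : ℝ, 0 < r → DifferentiableAt ℝ (fun s => artanh (β s)) r ∧
      DifferentiableAt ℝ (deriv fun s => artanh (β s)) r) ∧
    ∀ r : ℝ, 0 < r →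
      r * deriv (deriv fun s => artanh (β s)) r + deriv (fun s => artanh (β s)) r =
        m ^ 2 * r * Real.sinh (4 * artanh (β r)) := by
  set u : ℝ → ℝ := fun s => deriv β s / (1 - β s ^ 2) with hu_def
  have hne : ∀ s : ℝ, 0 < s → 1 - β s ^ 2 ≠ 0 := by
    intro s hs
    obtain ⟨a, b⟩ := hrange s hs
    nlinarith
  have hDh : ∀ s : ℝ, 0 < s →
      HasDerivAt (fun t => artanh (β t)) (u s) s := by
    intro s hs
    obtain ⟨a, b⟩ := hrange s hs
    have := (hasDerivAt_artanh a b).comp s ((hdiff s hs).1.hasDerivAt)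
    refine this.congr_deriv ?_
    simp [hu_def]
    ring
  have hderiv_eq : ∀ s : ℝ, 0 < s → deriv (fun t => artanh (β t)) s = u s :=
    fun s hs => (hDh s hs).deriv
  have hu_diff : ∀ r : ℝ, 0 < r → DifferentiableAt ℝ u r := by
    intro r hr
    exact (hdiff r hr).2.div
      ((differentiableAt_const 1).sub ((hdiff r hr).1.pow 2)) (hne r hr)
  have hev : ∀ r : ℝ, 0 < r → deriv (fun t => artanh (β t)) =ᶠ[nhds r] u := by
    intro r hr
    filter_upwards [isOpen_Ioi.mem_nhds (Set.mem_Ioi.2 hr)] with s hs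
    exact hderiv_eq s hs
  constructor
  · intro r hr
    refine ⟨(hDh r hr).differentiableAt, ?_⟩
    exact (hu_diff r hr).congr_of_eventuallyEq (hev r hr)
  · intro r hr
    have hd2 : deriv (deriv fun s => artanh (β s)) r = deriv u r :=
      Filter.EventuallyEq.deriv_eq (hev r hr)
    have hprod : HasDerivAt (fun s => s * u s) (1 * u r + r * deriv u r) r :=
      (hasDerivAt_id r).mul (hu_diff r hr).hasDerivAt
    have hfun : (fun s => s * deriv β s / (1 - β s ^ 2)) = fun s => s * u s := by
      funext s
      simp [hu_def, mul_div_assoc]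
    have hkey : 1 * u r + r * deriv u r =
        4 * m ^ 2 * r * β r * (1 + β r ^ 2) / (1 - β r ^ 2) ^ 2 := by
      rw [← hprod.deriv, ← hfun]
      exact heq r hr
    obtain ⟨a, b⟩ := hrange r hr
    rw [hd2, hderiv_eq r hr, sinh_four_artanh a b]
    have : r * deriv u r + u r = 1 * u r + r * deriv u r := by ring
    rw [this, hkey]
    ring
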